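/- Let G be the countable directed graph with a single vertex v and arrows a_n, n ∈ ℕ, and let F be the potential F(a_n) = t_n for a sequence (t_n) of real numbers; let β ∈ ℝ. Then there exists an e^{βF}-conformal measure m on P(G) with m(P(G)) = 1 if and only if Σ_{n=1}^∞ e^{-β t_n} = 1, and in that case m is unique: it is the infinite product of the probability measure on the arrow set assigning mass e^{-β t_n} to a_n, i.e. m(Z(a_{n_1} a_{n_2} ⋯ a_{n_k})) = e^{-β(t_{n_1} + ⋯ + t_{n_k})} for every finite word. -/

import Mathlib

open MeasureTheory
open scoped ENNReal

/-- A countable directed graph: countable sets of vertices and arrows together with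
source and range maps. -/
structure CDG where
  V : Type
  A : Type
  countV : Countable V
  countA : Countable A
  src : A → V
  rng : A → V

attribute [instance] CDG.countV CDG.countA

namespace CDG

/-- The space `P(G)` of infinite paths in `G`. -/
abbrev PathSpace (G : CDG) : Type :=
  {p : ℕ → G.A // ∀ i : ℕ, G.rng (p i) = G.src (p (i + 1))}

/-- The source vertex of an infinite path. -/
def isrc {G : CDG} (p : G.PathSpace) : G.V := G.src (p.1 0)

/-- The shift map `σ` on `P(G)`. -/
def shift {G : CDG} (p : G.PathSpace) : G.PathSpace :=
  ⟨fun i => p.1 (i + 1), fun i => p.2 (i + 1)⟩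

/-- A countable set carries the discrete (Borel) σ-algebra. -/
instance (G : CDG) : MeasurableSpace G.A := ⊤

/-- A finite path in `G`: a base vertex together with a (possibly empty) string of
composable arrows starting at the base vertex.  A finite path with no arrows is a vertex. -/
structure FinPath (G : CDG) where
  base : G.V
  arrows : List G.A
  head_src : ∀ a ∈ arrows.head?, G.src a = base
  chain : arrows.Chain' fun a b => G.rng a = G.src b

namespace FinPath

variable {G : CDG}

/-- The length `|μ|` of a finite path. -/
def length (μ : FinPath G) : ℕ := μ.arrows.length

/-- The source `s(μ)` of a finite path. -/
def fsrc (μ : FinPath G) : G.V := μ.base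

/-- The range `r(μ)` of a finite path. -/
def frng (μ : FinPath G) : G.V := μ.arrows.getLast?.elim μ.base G.rng

/-- A vertex, regarded as a finite path of length `0`. -/
def ofVertex (G : CDG) (v : G.V) : FinPath G :=
  ⟨v, [], by intro a ha; simp at ha, List.IsChain.nil⟩

/-- Concatenation `μδ` of composable finite paths. -/
def concat (μ δ : FinPath G) (h : δ.base = μ.frng) : FinPath G where
  base := μ.base
  arrows := μ.arrows ++ δ.arrows
  head_src := by
    intro a ha
    cases hμ : μ.arrows with
    | nil =>
        rw [hμ] at ha
        simp only [List.nil_append] at ha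
        have h1 : G.src a = δ.base := δ.head_src a ha
        have h2 : μ.frng = μ.base := by simp [FinPath.frng, hμ]
        rw [h1, h, h2]
    | cons b l =>
        rw [hμ] at ha
        simp only [List.cons_append, List.head?_cons, Option.mem_def,
          Option.some.injEq] at ha
        cases ha
        exact μ.head_src _ (by rw [hμ]; rfl)
  chain := by
    refine List.IsChain.append μ.chain δ.chain ?_
    intro x hx y hy
    rw [Option.mem_def] at hx
    have h1 : μ.frng = G.rng x := by simp [FinPath.frng, hx]
    have h2 : G.src y = δ.base := δ.head_src y hy
    rw [h2, h, h1]

end FinPath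

/-- The extension of a potential `F : G_Ar → ℝ` to finite paths:
`F(μ) = Σ_{i} F(a_i)`, with `F(v) = 0` for vertices. -/
def pot {G : CDG} (F : G.A → ℝ) (μ : FinPath G) : ℝ := (μ.arrows.map F).sum

/-- The cylinder set `Z(μ)` of a finite path `μ`. -/
def cyl {G : CDG} (μ : FinPath G) : Set G.PathSpace :=
  {p | G.src (p.1 0) = μ.base ∧
    ∀ (i : ℕ) (h : i < μ.arrows.length), p.1 i = μ.arrows.get ⟨i, h⟩}

/-- The cylinder set `Z(v)` of a vertex `v`. -/
def cylV (G : CDG) (v : G.V) : Set G.PathSpace := {p | G.src (p.1 0) = v}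

/-- An `e^{βF}`-conformal measure on `P(G)`: a non-zero Borel measure giving finite
measure to each `Z(v)` and satisfying `m(σ(B ∩ Z(a))) = e^{βF(a)} m(B ∩ Z(a))`. -/
structure IsConformal (G : CDG) (F : G.A → ℝ) (β : ℝ)
    (m : Measure G.PathSpace) : Prop where
  ne_zero : m ≠ 0
  vert_fin : ∀ v : G.V, m (cylV G v) < ⊤
  conformal : ∀ (a : G.A) (B : Set G.PathSpace), MeasurableSet B →
      m (shift '' (B ∩ {p : G.PathSpace | p.1 0 = a})) =
        ENNReal.ofReal (Real.exp (β * F a)) * m (B ∩ {p : G.PathSpace | p.1 0 = a})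

/-- The set `NW_G` of non-wandering vertices: those supporting a loop. -/
def NW (G : CDG) : Set G.V :=
  {v | ∃ μ : FinPath G, 0 < μ.length ∧ μ.fsrc = v ∧ μ.frng = v}

/-- The set `V_∞` of sinks and infinite emitters. -/
def Vinf (G : CDG) : Set G.V :=
  {v | (∀ a : G.A, G.src a ≠ v) ∨ {a : G.A | G.src a = v}.Infinite}

/-- A hereditary subset of vertices. -/
def Hereditary (G : CDG) (H : Set G.V) : Prop :=
  ∀ a : G.A, G.src a ∈ H → G.rng a ∈ H

/-- A saturated subset of vertices. -/
def Saturated (G : CDG) (H : Set G.V) : Prop :=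
  ∀ v : G.V, v ∉ Vinf G → (∀ a : G.A, G.src a = v → G.rng a ∈ H) → v ∈ H

/-- `G` is cofinal when the only non-empty hereditary and saturated subset of
vertices is the set of all vertices. -/
def Cofinal (G : CDG) : Prop :=
  ∀ H : Set G.V, H.Nonempty → Hereditary G H → Saturated G H → H = Set.univ

/-- `P(G)_rec`: the paths passing through every arrow of `NW_Ar` infinitely often. -/
def recSet (G : CDG) : Set G.PathSpace :=
  {p | ∀ a : G.A, G.src a ∈ NW G → ∀ n : ℕ, ∃ i ≥ n, p.1 i = a}

/-- `P(G)_wan`: the paths visiting every vertex at most finitely many times. -/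
def wanSet (G : CDG) : Set G.PathSpace :=
  {p | ∀ v : G.V, {i : ℕ | G.src (p.1 i) = v}.Finite}

/-- The matrix entry `A(β)^n_{v,w} = Σ_μ e^{-βF(μ)} ∈ [0,∞]`, summing over finite
paths `μ` of length `n` with `s(μ) = v` and `r(μ) = w`. -/
noncomputable def Apow (G : CDG) (F : G.A → ℝ) (β : ℝ) (n : ℕ) (v w : G.V) : ℝ≥0∞ :=
  ∑' μ : {μ : FinPath G // μ.length = n ∧ μ.fsrc = v ∧ μ.frng = w},
    ENNReal.ofReal (Real.exp (-(β * pot F μ.1)))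

/-- An `A(β)`-harmonic vector: non-zero, finite, non-negative, and harmonic at
every vertex. -/
def IsHarmonicVec (G : CDG) (F : G.A → ℝ) (β : ℝ) (ψ : G.V → ℝ≥0∞) : Prop :=
  ψ ≠ 0 ∧ (∀ v : G.V, ψ v ≠ ⊤) ∧
    ∀ v : G.V, ψ v =
      ∑' a : {a : G.A // G.src a = v},
        ENNReal.ofReal (Real.exp (-(β * F a.1))) * ψ (G.rng a.1)

end CDG

/-- The graph of the Cuntz algebra `O_∞`: a single vertex and arrows indexed by `ℕ`. -/
def OinfGraph : CDG where
  V := Unit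
  A := ℕ
  countV := inferInstance
  countA := inferInstance
  src := fun _ => ()
  rng := fun _ => ()

/-- The finite path in `OinfGraph` given by a finite word in the arrows. -/
def wordPath (w : List ℕ) : CDG.FinPath OinfGraph where
  base := ()
  arrows := w
  head_src := by intro a _; rfl
  chain := by
    refine List.isChain_iff_getElem.mpr ?_
    intro i h
    rfl

/-!
Conformality at an arrow `a` says that `m` is `e^{β t_a}` times the pull-back of `m` along
`cons a : q ↦ a q` (prepending `a`), whose image is `Z(a)`. Iterating along a word gives
`m(Z(w)) = e^{-β F(w)} m(P(G))`. The cylinders of words form a π-system generating the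
σ-algebra of `P(G)`, so a finite measure is determined by these values; summing over the first
letter forces `Σ e^{-β t_n} = 1`. Conversely, when this sum is `1` the infinite product of the
probability measure `a_n ↦ e^{-β t_n}` has exactly these cylinder masses, hence is conformal.
-/

open Set MeasureTheory MeasurableSpace CDG

section WordCylinder

variable {α : Type*}

def wordCyl (w : List α) : Set (ℕ → α) := {p | ∀ i (h : i < w.length), p i = w[i]}

@[simp]
lemma wordCyl_nil : wordCyl ([] : List α) = univ := by
  simp [wordCyl]

lemma wordCyl_eq_pi (w : List α) :
    wordCyl w = (Finset.range w.length : Set ℕ).pi fun i => {a | w[i]? = some a} := by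
  ext p
  simp only [wordCyl, Finset.coe_range, mem_pi, mem_Iio, List.getElem?_eq_some_iff]
  exact forall₂_congr fun i hi => ⟨fun h => ⟨hi, h.symm⟩, fun h => h.2.symm⟩

lemma wordCyl_subset_of_length_le {v w : List α} {p : ℕ → α} (hv : p ∈ wordCyl v)
    (hw : p ∈ wordCyl w) (h : v.length ≤ w.length) : wordCyl w ⊆ wordCyl v := by
  intro q hq i hi
  rw [hq i (hi.trans_le h), ← hw i (hi.trans_le h), hv i hi]

lemma isPiSystem_range_wordCyl : IsPiSystem (range (wordCyl (α := α))) := by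
  rintro _ ⟨v, rfl⟩ _ ⟨w, rfl⟩ ⟨p, hv, hw⟩
  rcases le_total v.length w.length with h | h
  · exact ⟨w, (inter_eq_right.mpr (wordCyl_subset_of_length_le hv hw h)).symm⟩
  · exact ⟨v, (inter_eq_left.mpr (wordCyl_subset_of_length_le hw hv h)).symm⟩

lemma setOf_apply_eq_eq_iUnion_wordCyl (i : ℕ) (a : α) :
    {p : ℕ → α | p i = a} = ⋃ v : Fin i → α, wordCyl (List.ofFn v ++ [a]) := by
  ext p
  simp only [mem_iUnion]
  constructor
  · rintro rfl
    refine ⟨fun j => p j, fun j hj => ?_⟩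
    simp only [List.length_append, List.length_ofFn, List.length_singleton] at hj
    rcases (Nat.lt_succ_iff.mp hj).lt_or_eq with hj | rfl
    · simp [List.getElem_append_left, hj]
    · simp
  · rintro ⟨v, hv⟩
    simpa using hv i (by simp)

lemma wordCyl_cons (a : α) (w : List α) :
    wordCyl (a :: w) = (fun p i => p (i + 1)) ⁻¹' wordCyl w ∩ {p | p 0 = a} := by
  ext p
  exact Nat.forall_lt_succ_left'.trans and_comm

variable [MeasurableSpace α] [MeasurableSingletonClass α]

lemma measurableSet_setOf_getElem?_eq (w : List α) (i : ℕ) :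
    MeasurableSet {a | w[i]? = some a} := by
  cases w[i]? with
  | none => simp
  | some b => simp

lemma measurableSet_wordCyl (w : List α) : MeasurableSet (wordCyl w) := by
  rw [wordCyl_eq_pi]
  exact .pi (Finset.countable_toSet _) fun i _ => measurableSet_setOf_getElem?_eq w i

lemma generateFrom_range_wordCyl [Countable α] :
    generateFrom (range (wordCyl (α := α))) = MeasurableSpace.pi := by
  refine le_antisymm (generateFrom_le ?_) ?_
  · rintro _ ⟨w, rfl⟩
    exact measurableSet_wordCyl w
  · have hcoord (i : ℕ) : Measurable[generateFrom (range wordCyl)] fun p : ℕ → α => p i := by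
      refine @measurable_to_countable' _ _ _ _ (generateFrom (range wordCyl)) _ fun a => ?_
      rw [show (fun p : ℕ → α => p i) ⁻¹' {a} = {p | p i = a} from rfl,
        setOf_apply_eq_eq_iUnion_wordCyl]
      exact .iUnion fun v => measurableSet_generateFrom ⟨_, rfl⟩
    exact iSup_le fun i => (hcoord i).comap_le

lemma infinitePi_wordCyl (μ : Measure α) [IsProbabilityMeasure μ] (w : List α) :
    Measure.infinitePi (fun _ : ℕ => μ) (wordCyl w) = (w.map fun a => μ {a}).prod := by
  have hset (i : Fin w.length) : {a | w[i.1]? = some a} = {w[i.1]} := by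
    ext a
    simp [eq_comm]
  rw [wordCyl_eq_pi, Measure.infinitePi_pi _ fun i _ => measurableSet_setOf_getElem?_eq w i,
    Finset.prod_range, ← List.ofFn_getElem_eq_map, List.prod_ofFn]
  exact Fintype.prod_congr _ _ fun i => by rw [hset]

end WordCylinder

namespace CDG

variable {G : CDG}

instance : MeasurableSingletonClass G.A := ⟨fun _ => MeasurableSpace.measurableSet_top⟩

def pathCyl (w : List G.A) : Set G.PathSpace := Subtype.val ⁻¹' wordCyl w

@[simp]
lemma pathCyl_nil : pathCyl ([] : List G.A) = univ := by
  simp [pathCyl]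

lemma measurableSet_pathCyl (w : List G.A) : MeasurableSet (pathCyl w) :=
  measurable_subtype_coe (measurableSet_wordCyl w)

lemma ext_of_pathCyl {m m' : Measure G.PathSpace} [IsFiniteMeasure m]
    (h : ∀ w, m (pathCyl w) = m' (pathCyl w)) : m = m' := by
  have hrange : range (pathCyl (G := G)) = preimage Subtype.val '' range wordCyl := by
    rw [← range_comp]; rfl
  refine ext_of_generate_finite (range pathCyl) ?_ ?_ (by rintro _ ⟨w, rfl⟩; exact h w)
    (by simpa using h [])
  · rw [hrange, ← comap_generateFrom, generateFrom_range_wordCyl]; rfl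
  · rw [hrange]
    convert isPiSystem_range_wordCyl.comap Subtype.val using 1
    ext s; simp [eq_comm]

lemma measure_univ_eq_tsum_pathCyl (m : Measure G.PathSpace) :
    m univ = ∑' a, m (pathCyl [a]) := by
  have hfiber (a : G.A) : pathCyl [a] = (fun p : G.PathSpace => p.1 0) ⁻¹' {a} := by
    ext p
    simp [pathCyl, wordCyl]
  simp_rw [hfiber]
  rw [← measure_iUnion (pairwise_disjoint_fiber _) fun a => hfiber a ▸ measurableSet_pathCyl [a],
    ← preimage_iUnion, iUnion_of_singleton, preimage_univ]

lemma measurable_shift : Measurable (shift : G.PathSpace → G.PathSpace) :=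
  (measurable_pi_lambda (fun p : G.PathSpace => fun i => p.1 (i + 1)) fun i =>
    (measurable_pi_apply (i + 1)).comp measurable_subtype_coe).subtype_mk

end CDG

lemma ofReal_exp_neg_mul_ofReal_exp (x : ℝ) :
    ENNReal.ofReal (Real.exp (-x)) * ENNReal.ofReal (Real.exp x) = 1 := by
  rw [← ENNReal.ofReal_mul (Real.exp_pos _).le, ← Real.exp_add, neg_add_cancel, Real.exp_zero,
    ENNReal.ofReal_one]

lemma ofReal_exp_neg_mul_sum {ι : Type*} (t : ι → ℝ) (β : ℝ) (w : List ι) :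
    ENNReal.ofReal (Real.exp (-(β * (w.map t).sum))) =
      (w.map fun n => ENNReal.ofReal (Real.exp (-(β * t n)))).prod := by
  induction w with
  | nil => simp
  | cons a w ih =>
    rw [List.map_cons, List.sum_cons, List.map_cons, List.prod_cons, ← ih, mul_add, neg_add,
      Real.exp_add, ENNReal.ofReal_mul (Real.exp_pos _).le]

namespace OinfGraph

def cons (a : OinfGraph.A) (q : OinfGraph.PathSpace) : OinfGraph.PathSpace :=
  ⟨fun i => Nat.casesOn i a q.1, fun _ => rfl⟩

section Cons

variable (a : OinfGraph.A)

lemma shift_cons (q : OinfGraph.PathSpace) : shift (cons a q) = q := rfl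

lemma cons_shift {a : OinfGraph.A} {p : OinfGraph.PathSpace} (h : p.1 0 = a) :
    cons a (shift p) = p := by
  ext i
  cases i with
  | zero => exact h.symm
  | succ j => rfl

lemma cons_injective : Function.Injective (cons a) :=
  Function.LeftInverse.injective (shift_cons a)

lemma image_cons (s : Set OinfGraph.PathSpace) :
    cons a '' s = shift ⁻¹' s ∩ {p | p.1 0 = a} := by
  ext p
  constructor
  · rintro ⟨q, hq, rfl⟩
    exact ⟨hq, rfl⟩
  · rintro ⟨hp, h0⟩
    exact ⟨shift p, hp, cons_shift h0⟩

lemma range_cons : range (cons a) = {p | p.1 0 = a} := by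
  rw [← image_univ, image_cons, preimage_univ, univ_inter]

lemma image_shift_inter (B : Set OinfGraph.PathSpace) :
    shift '' (B ∩ {p | p.1 0 = a}) = cons a ⁻¹' B := by
  ext q
  constructor
  · rintro ⟨p, ⟨hp, h0⟩, rfl⟩
    rwa [mem_preimage, cons_shift h0]
  · intro hq
    exact ⟨cons a q, ⟨hq, rfl⟩, shift_cons a q⟩

lemma measurable_cons : Measurable (cons a) := by
  refine (measurable_pi_lambda _ fun i => ?_).subtype_mk
  cases i with
  | zero => exact measurable_const
  | succ j => exact (measurable_pi_apply j).comp measurable_subtype_coe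

lemma measurableEmbedding_cons : MeasurableEmbedding (cons a) where
  injective := cons_injective a
  measurable := measurable_cons a
  measurableSet_image' s hs := by
    rw [image_cons]
    exact (measurable_shift hs).inter
      (measurableSet_eq_fun ((measurable_pi_apply 0).comp measurable_subtype_coe) measurable_const)

lemma image_cons_pathCyl (w : List OinfGraph.A) : cons a '' pathCyl w = pathCyl (a :: w) := by
  rw [image_cons]
  exact congrArg (Subtype.val ⁻¹' ·) (wordCyl_cons a w).symm

end Cons

lemma cyl_wordPath (w : List ℕ) : cyl (wordPath w) = pathCyl w := by
  ext p
  simp only [cyl, wordPath, pathCyl, wordCyl, mem_preimage]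
  exact and_iff_right rfl

def ofSeq (p : ℕ → OinfGraph.A) : OinfGraph.PathSpace := ⟨p, fun _ => rfl⟩

lemma measurable_ofSeq : Measurable ofSeq := measurable_id.subtype_mk

lemma exists_isProbabilityMeasure_pathCyl (c : OinfGraph.A → ℝ≥0∞) (hc : ∑' a, c a = 1) :
    ∃ m : Measure OinfGraph.PathSpace, IsProbabilityMeasure m ∧
      ∀ w : List OinfGraph.A, m (pathCyl w) = (w.map c).prod := by
  let μ : PMF OinfGraph.A := ⟨c, ENNReal.summable.hasSum_iff.mpr hc⟩
  refine ⟨(Measure.infinitePi fun _ : ℕ => μ.toMeasure).map ofSeq,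
    Measure.isProbabilityMeasure_map measurable_ofSeq.aemeasurable, fun w => ?_⟩
  rw [Measure.map_apply measurable_ofSeq (measurableSet_pathCyl w)]
  refine (infinitePi_wordCyl μ.toMeasure w).trans ?_
  exact congrArg List.prod <| List.map_congr_left fun b _ =>
    μ.toMeasure_apply_singleton b (measurableSet_singleton b)

variable {t : OinfGraph.A → ℝ} {β : ℝ} {m : Measure OinfGraph.PathSpace}

lemma conformal_iff_eq_smul_comap_cons :
    (∀ (a : OinfGraph.A) (B : Set OinfGraph.PathSpace), MeasurableSet B →
      m (shift '' (B ∩ {p | p.1 0 = a})) =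
        ENNReal.ofReal (Real.exp (β * t a)) * m (B ∩ {p | p.1 0 = a})) ↔
    ∀ a, m = ENNReal.ofReal (Real.exp (β * t a)) • m.comap (cons a) := by
  refine forall_congr' fun a => ⟨fun h => ?_, fun h B hB => ?_⟩
  · ext C hC
    have hconf := h (cons a '' C) ((measurableEmbedding_cons a).measurableSet_image' hC)
    rw [image_shift_inter, (cons_injective a).preimage_image,
      inter_eq_left.mpr ((image_subset_range _ _).trans (range_cons a).subset)] at hconf
    rw [hconf, Measure.smul_apply, (measurableEmbedding_cons a).comap_apply, smul_eq_mul]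
  · rw [image_shift_inter, ← range_cons, ← image_preimage_eq_inter_range,
      ← (measurableEmbedding_cons a).comap_apply, ← smul_eq_mul, ← Measure.smul_apply, ← h]

lemma measure_pathCyl_eq_mul_cons
    (h : ∀ a, m = ENNReal.ofReal (Real.exp (β * t a)) • m.comap (cons a)) (a : OinfGraph.A)
    (w : List OinfGraph.A) :
    m (pathCyl w) = ENNReal.ofReal (Real.exp (β * t a)) * m (pathCyl (a :: w)) := by
  conv_lhs => rw [h a]
  rw [Measure.smul_apply, (measurableEmbedding_cons a).comap_apply, image_cons_pathCyl,
    smul_eq_mul]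

lemma measure_pathCyl_of_isConformal (hm : IsConformal OinfGraph t β m) (w : List OinfGraph.A) :
    m (pathCyl w) = (w.map fun a => ENNReal.ofReal (Real.exp (-(β * t a)))).prod * m univ := by
  have h := conformal_iff_eq_smul_comap_cons.mp hm.conformal
  induction w with
  | nil => rw [pathCyl_nil, List.map_nil, List.prod_nil, one_mul]
  | cons a w ih =>
    rw [List.map_cons, List.prod_cons, mul_assoc, ← ih, measure_pathCyl_eq_mul_cons h a w,
      ← mul_assoc, ofReal_exp_neg_mul_ofReal_exp, one_mul]

lemma isConformal_of_measure_pathCyl [IsProbabilityMeasure m]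
    (h : ∀ w : List OinfGraph.A,
      m (pathCyl w) = (w.map fun a => ENNReal.ofReal (Real.exp (-(β * t a)))).prod) :
    IsConformal OinfGraph t β m where
  ne_zero := IsProbabilityMeasure.ne_zero m
  vert_fin _ := measure_lt_top _ _
  conformal := conformal_iff_eq_smul_comap_cons.mpr fun a => ext_of_pathCyl fun w => by
    rw [Measure.smul_apply, (measurableEmbedding_cons a).comap_apply, image_cons_pathCyl, h, h,
      List.map_cons, List.prod_cons, smul_eq_mul, ← mul_assoc, mul_comm (ENNReal.ofReal _),
      ofReal_exp_neg_mul_ofReal_exp, one_mul]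

end OinfGraph

open CDG in
/-- for the graph of `O_∞` with potential `F(a_n) = t_n`, there is an
`e^{βF}`-conformal probability measure iff `Σ_n e^{-β t_n} = 1`, in which case it is
unique and is the product measure: `m(Z(a_{n_1}⋯a_{n_k})) = e^{-β(t_{n_1}+⋯+t_{n_k})}`. -/
theorem stmt18 (t : ℕ → ℝ) (β : ℝ) :
    ((∃ m : MeasureTheory.Measure OinfGraph.PathSpace,
        IsConformal OinfGraph t β m ∧ m Set.univ = 1) ↔
      ∑' n : ℕ, ENNReal.ofReal (Real.exp (-(β * t n))) = 1) ∧
    (∀ m m' : MeasureTheory.Measure OinfGraph.PathSpace,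
      IsConformal OinfGraph t β m → m Set.univ = 1 →
      IsConformal OinfGraph t β m' → m' Set.univ = 1 → m = m') ∧
    (∀ m : MeasureTheory.Measure OinfGraph.PathSpace,
      IsConformal OinfGraph t β m → m Set.univ = 1 →
      ∀ w : List ℕ,
        m (cyl (wordPath w)) = ENNReal.ofReal (Real.exp (-(β * (w.map t).sum)))) := by
  have hcyl (m : Measure OinfGraph.PathSpace) (hm : IsConformal OinfGraph t β m)
      (h1 : m univ = 1) (w : List ℕ) :
      m (cyl (wordPath w)) = ENNReal.ofReal (Real.exp (-(β * (w.map t).sum))) := by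
    rw [OinfGraph.cyl_wordPath]
    refine (OinfGraph.measure_pathCyl_of_isConformal hm w).trans ?_
    rw [h1, mul_one]
    exact (ofReal_exp_neg_mul_sum t β w).symm
  refine ⟨⟨fun ⟨m, hm, h1⟩ => ?_, fun hsum => ?_⟩, fun m m' hm h1 hm' h1' => ?_, hcyl⟩
  · rw [← h1, measure_univ_eq_tsum_pathCyl]
    refine tsum_congr fun a => ?_
    rw [OinfGraph.measure_pathCyl_of_isConformal hm, h1, mul_one]
    exact List.prod_singleton.symm
  · obtain ⟨m, hm, hcylm⟩ := OinfGraph.exists_isProbabilityMeasure_pathCyl _ hsum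
    exact ⟨m, OinfGraph.isConformal_of_measure_pathCyl hcylm, measure_univ⟩
  · have : IsProbabilityMeasure m := ⟨h1⟩
    refine ext_of_pathCyl fun w => ?_
    rw [OinfGraph.measure_pathCyl_of_isConformal hm, OinfGraph.measure_pathCyl_of_isConformal hm',
      h1, h1']
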